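/- Any global minimizer s* of the cubic model m(s) = ⟨g, s⟩ + (1/2)⟨s, H s⟩ + (σ/3)‖s‖³ satisfies m(s*) ≤ -(σ/6)‖s*‖³. -/
import Mathlib


open scoped RealInnerProductSpace

/-- Any global minimizer `s*` of the cubic model satisfies `m(s*) ≤ -(σ/6)‖s*‖³`. -/
theorem cubic_model_min_value_bound (d : ℕ) (g : EuclideanSpace ℝ (Fin d))
    (H : EuclideanSpace ℝ (Fin d) →L[ℝ] EuclideanSpace ℝ (Fin d))
    (hsymm : ∀ u v, ⟪H u, v⟫ = ⟪u, H v⟫)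
    (σ : ℝ) (hσ : 0 < σ)
    (m : EuclideanSpace ℝ (Fin d) → ℝ)
    (hm : m = fun s => ⟪g, s⟫ + (1 / 2) * ⟪s, H s⟫ + (σ / 3) * ‖s‖ ^ 3)
    (sstar : EuclideanSpace ℝ (Fin d)) (hmin : ∀ s, m sstar ≤ m s) :
    m sstar ≤ -(σ / 6) * ‖sstar‖ ^ 3 := by
  subst hm
  set a : ℝ := ⟪g, sstar⟫ with ha
  set b : ℝ := ⟪sstar, H sstar⟫ with hb
  set c : ℝ := σ * ‖sstar‖ ^ 3 with hc
  have hc0 : 0 ≤ c := by positivity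
  -- a ≤ 0 from comparing with -sstar
  have hneg := hmin (-sstar)
  simp only [inner_neg_right, inner_neg_left, inner_neg_neg, map_neg, norm_neg, neg_neg] at hneg
  have haneg : a ≤ 0 := by
    simp only [← ha, ← hb] at hneg ⊢
    linarith
  -- m(t • sstar) for t ∈ (0,1)
  have hscale : ∀ t ∈ Set.Ioo (0:ℝ) 1,
      a + b * (1 + t) / 2 + c * (1 + t + t ^ 2) / 3 ≤ 0 := by
    intro t ht
    obtain ⟨ht0, ht1⟩ := ht
    have h := hmin (t • sstar)
    simp only [inner_smul_right, map_smul, real_inner_smul_left, norm_smul,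
      Real.norm_eq_abs, abs_of_pos ht0] at h
    have h' : a + (1/2) * b + (σ/3) * ‖sstar‖^3
        ≤ t * a + (1/2) * (t * (t * b)) + (σ/3) * (t * ‖sstar‖)^3 := h
    have hkey : a * (1 - t) + b * (1 - t^2) / 2 + c * (1 - t^3) / 3 ≤ 0 := by
      simp only [hc]; nlinarith [h']
    have hpos : 0 < 1 - t := by linarith
    nlinarith [hkey, hpos]
  -- limit as t → 1⁻ gives a + b + c ≤ 0
  have hlim : a + b + c ≤ 0 := by
    have hF : Continuous (fun t : ℝ => a + b * (1 + t) / 2 + c * (1 + t + t ^ 2) / 3) := by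
      exact (continuous_const.add ((continuous_const.mul (continuous_const.add continuous_id)).div_const 2)).add ((continuous_const.mul ((continuous_const.add continuous_id).add (continuous_pow 2))).div_const 3)
    have htend : Filter.Tendsto (fun t : ℝ => a + b * (1 + t) / 2 + c * (1 + t + t ^ 2) / 3)
        (nhdsWithin 1 (Set.Iio 1)) (nhds (a + b * (1 + 1) / 2 + c * (1 + 1 + 1 ^ 2) / 3)) :=
      (hF.tendsto 1).mono_left nhdsWithin_le_nhds
    have hval : a + b * (1 + 1) / 2 + c * (1 + 1 + 1 ^ 2) / 3 = a + b + c := by ring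
    rw [hval] at htend
    refine le_of_tendsto htend ?_
    have hmem : Set.Ioo (0:ℝ) 1 ∈ nhdsWithin 1 (Set.Iio 1) :=
      Ioo_mem_nhdsLT_of_mem (by constructor <;> norm_num)
    filter_upwards [hmem] with t ht using hscale t ht
  show a + (1/2) * b + (σ/3) * ‖sstar‖^3 ≤ -(σ/6) * ‖sstar‖^3
  have : a + (1/2) * b + c/3 + c/6 ≤ 0 := by linarith
  simp only [hc] at this
  linarith
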